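/- arXiv:2109.06403 — 2 statements merged into one kernel-verified Lean document; each statement's English description precedes it below -/
import Mathlib

section
/- Let ℬ ≤ M(n,𝔽) be a matrix space and let c > 0 be the maximum of sd_ℬ(U) over all subspaces U ≤ 𝔽ⁿ. Let U be the canonical shrunk subspace of ℬ, i.e., the unique subspace of smallest dimension with sd_ℬ(U) = c. Then for every pair (A,C) of invertible n×n matrices with AℬC⁻¹ = ℬ, the subspace U is invariant under C, i.e., C(U) = U. -/
/-- The image `ℬ(U)` of a subspace `U ≤ 𝔽ⁿ` under a matrix space `ℬ ≤ M(n,𝔽)`. -/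
def matImage {𝔽 : Type*} [Field 𝔽] {n : ℕ} (ℬ : Submodule 𝔽 (Matrix (Fin n) (Fin n) 𝔽))
    (U : Submodule 𝔽 (Fin n → 𝔽)) : Submodule 𝔽 (Fin n → 𝔽) :=
  Submodule.span 𝔽 {v | ∃ B ∈ ℬ, ∃ u ∈ U, v = B.mulVec u}

/-- `sd_ℬ(U) = dim U − dim ℬ(U)`. -/
noncomputable def sd {𝔽 : Type*} [Field 𝔽] {n : ℕ} (ℬ : Submodule 𝔽 (Matrix (Fin n) (Fin n) 𝔽))
    (U : Submodule 𝔽 (Fin n → 𝔽)) : ℤ :=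
  (Module.finrank 𝔽 U : ℤ) - (Module.finrank 𝔽 (matImage ℬ U) : ℤ)

section Aux

variable {𝔽 : Type*} [Field 𝔽] {n : ℕ} (ℬ : Submodule 𝔽 (Matrix (Fin n) (Fin n) 𝔽))

lemma matImage_mono {U W : Submodule 𝔽 (Fin n → 𝔽)} (h : U ≤ W) :
    matImage ℬ U ≤ matImage ℬ W :=
  Submodule.span_mono (by rintro v ⟨B, hB, u, hu, rfl⟩; exact ⟨B, hB, u, h hu, rfl⟩)

lemma matImage_sup (U W : Submodule 𝔽 (Fin n → 𝔽)) :
    matImage ℬ (U ⊔ W) = matImage ℬ U ⊔ matImage ℬ W := by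
  apply le_antisymm
  · rw [matImage, Submodule.span_le]
    rintro v ⟨B, hB, u, hu, rfl⟩
    obtain ⟨x, hx, y, hy, rfl⟩ := Submodule.mem_sup.1 hu
    rw [Matrix.mulVec_add]
    exact add_mem
      (Submodule.mem_sup_left (Submodule.subset_span ⟨B, hB, x, hx, rfl⟩))
      (Submodule.mem_sup_right (Submodule.subset_span ⟨B, hB, y, hy, rfl⟩))
  · exact sup_le (matImage_mono ℬ le_sup_left) (matImage_mono ℬ le_sup_right)

lemma matImage_inf_le (U W : Submodule 𝔽 (Fin n → 𝔽)) :
    matImage ℬ (U ⊓ W) ≤ matImage ℬ U ⊓ matImage ℬ W := by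
  rw [matImage, Submodule.span_le]
  rintro v ⟨B, hB, u, hu, rfl⟩
  exact ⟨Submodule.subset_span ⟨B, hB, u, hu.1, rfl⟩,
    Submodule.subset_span ⟨B, hB, u, hu.2, rfl⟩⟩

/-- Submodularity: `sd U + sd W ≤ sd (U ⊓ W) + sd (U ⊔ W)`. -/
lemma sd_submodular (U W : Submodule 𝔽 (Fin n → 𝔽)) :
    sd ℬ U + sd ℬ W ≤ sd ℬ (U ⊓ W) + sd ℬ (U ⊔ W) := by
  have h1 : Module.finrank 𝔽 (U ⊔ W : Submodule 𝔽 (Fin n → 𝔽)) +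
      Module.finrank 𝔽 (U ⊓ W : Submodule 𝔽 (Fin n → 𝔽)) =
      Module.finrank 𝔽 U + Module.finrank 𝔽 W :=
    Submodule.finrank_sup_add_finrank_inf_eq U W
  have h2 : Module.finrank 𝔽 (matImage ℬ U ⊔ matImage ℬ W : Submodule 𝔽 (Fin n → 𝔽)) +
      Module.finrank 𝔽 (matImage ℬ U ⊓ matImage ℬ W : Submodule 𝔽 (Fin n → 𝔽)) =
      Module.finrank 𝔽 (matImage ℬ U) + Module.finrank 𝔽 (matImage ℬ W) :=
    Submodule.finrank_sup_add_finrank_inf_eq _ _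
  have h3 : Module.finrank 𝔽 (matImage ℬ (U ⊓ W)) ≤
      Module.finrank 𝔽 (matImage ℬ U ⊓ matImage ℬ W : Submodule 𝔽 (Fin n → 𝔽)) :=
    Submodule.finrank_mono (matImage_inf_le ℬ U W)
  have h4 : Module.finrank 𝔽 (matImage ℬ (U ⊔ W)) =
      Module.finrank 𝔽 (matImage ℬ U ⊔ matImage ℬ W : Submodule 𝔽 (Fin n → 𝔽)) := by
    rw [matImage_sup]
  simp only [sd]
  omega

end Aux

/-- The canonical shrunk subspace (the one of the smallest dimension attaining the maximum
`c > 0` of `sd_ℬ`) is invariant under `C` for every `(A, C)` in the stabilizer of `ℬ` under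
the action `(A, C) · ℬ = A ℬ C⁻¹`. -/
theorem canonical_shrunk_subspace_invariant {𝔽 : Type*} [Field 𝔽] {n : ℕ}
    (ℬ : Submodule 𝔽 (Matrix (Fin n) (Fin n) 𝔽)) (c : ℤ) (hc : 0 < c)
    (hmax : ∀ W : Submodule 𝔽 (Fin n → 𝔽), sd ℬ W ≤ c)
    (U : Submodule 𝔽 (Fin n → 𝔽)) (hU : sd ℬ U = c)
    (hUmin : ∀ W : Submodule 𝔽 (Fin n → 𝔽), sd ℬ W = c →
      Module.finrank 𝔽 U ≤ Module.finrank 𝔽 W)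
    (A C : (Matrix (Fin n) (Fin n) 𝔽)ˣ)
    (hstab : (fun B => (A : Matrix (Fin n) (Fin n) 𝔽) * B * ((C⁻¹ : _ˣ) : Matrix (Fin n) (Fin n) 𝔽)) ''
      (ℬ : Set (Matrix (Fin n) (Fin n) 𝔽)) = (ℬ : Set (Matrix (Fin n) (Fin n) 𝔽))) :
    Submodule.map (Matrix.mulVecLin ((C : Matrix (Fin n) (Fin n) 𝔽))) U = U := by
  -- rank is preserved by mapping with an invertible matrix
  have finrank_map_unit : ∀ (D : (Matrix (Fin n) (Fin n) 𝔽)ˣ)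
      (V : Submodule 𝔽 (Fin n → 𝔽)),
      Module.finrank 𝔽 (Submodule.map (Matrix.mulVecLin (D : Matrix (Fin n) (Fin n) 𝔽)) V)
        = Module.finrank 𝔽 V := by
    intro D V
    refine le_antisymm (Submodule.finrank_map_le _ _) ?_
    have hinv : Submodule.map (Matrix.mulVecLin ((D⁻¹ : _ˣ) : Matrix (Fin n) (Fin n) 𝔽))
        (Submodule.map (Matrix.mulVecLin (D : Matrix (Fin n) (Fin n) 𝔽)) V) = V := by
      rw [← Submodule.map_comp, ← Matrix.mulVecLin_mul, Units.inv_mul, Matrix.mulVecLin_one,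
        Submodule.map_id]
    conv_lhs => rw [← hinv]
    exact Submodule.finrank_map_le _ _
  set W := Submodule.map (Matrix.mulVecLin ((C : Matrix (Fin n) (Fin n) 𝔽))) U with hWdef
  -- key: ℬ(W) = A · ℬ(U)
  have hkey : matImage ℬ W =
      Submodule.map (Matrix.mulVecLin ((A : Matrix (Fin n) (Fin n) 𝔽))) (matImage ℬ U) := by
    rw [matImage, matImage, Submodule.map_span]
    congr 1
    ext v
    constructor
    · rintro ⟨B, hB, w, hw, rfl⟩
      obtain ⟨u, hu, rfl⟩ := hw
      have hB' : B ∈ (fun B => (A : Matrix (Fin n) (Fin n) 𝔽) * B *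
          ((C⁻¹ : _ˣ) : Matrix (Fin n) (Fin n) 𝔽)) '' (ℬ : Set _) := by rw [hstab]; exact hB
      obtain ⟨B', hB', rfl⟩ := hB'
      refine ⟨B'.mulVec u, ⟨B', hB', u, hu, rfl⟩, ?_⟩
      simp only [Matrix.mulVecLin_apply, Matrix.mulVec_mulVec]
      rw [mul_assoc, Units.inv_mul, mul_one]
    · rintro ⟨v, ⟨B, hB, u, hu, rfl⟩, rfl⟩
      refine ⟨(A : Matrix (Fin n) (Fin n) 𝔽) * B * ((C⁻¹ : _ˣ) : Matrix (Fin n) (Fin n) 𝔽), ?_,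
        (C : Matrix (Fin n) (Fin n) 𝔽).mulVec u, ⟨u, hu, rfl⟩, ?_⟩
      · show _ ∈ (ℬ : Set (Matrix (Fin n) (Fin n) 𝔽))
        rw [← hstab]; exact ⟨B, hB, rfl⟩
      · simp only [Matrix.mulVecLin_apply, Matrix.mulVec_mulVec]
        rw [mul_assoc, Units.inv_mul, mul_one]
  -- hence sd ℬ W = c
  have hW : sd ℬ W = c := by
    rw [sd, hkey, finrank_map_unit A, finrank_map_unit C, ← sd, hU]
  -- sd (U ⊓ W) = c by submodularity and maximality
  have hinf : sd ℬ (U ⊓ W) = c := by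
    have := sd_submodular ℬ U W
    have h1 := hmax (U ⊔ W)
    have h2 := hmax (U ⊓ W)
    omega
  -- minimality forces U ⊓ W = U, i.e. U ≤ W
  have hUW : U ≤ W := by
    have hle : Module.finrank 𝔽 U ≤ Module.finrank 𝔽 (U ⊓ W : Submodule 𝔽 (Fin n → 𝔽)) :=
      hUmin _ hinf
    have : (U ⊓ W : Submodule 𝔽 (Fin n → 𝔽)) = U :=
      Submodule.eq_of_le_of_finrank_le inf_le_left hle
    rw [← this]; exact inf_le_right
  -- equal finrank then gives W = U
  exact (Submodule.eq_of_le_of_finrank_le hUW (finrank_map_unit C U).le).symm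
end

section
/- Let 𝔤 be a finite-dimensional semisimple Lie algebra over an algebraically closed field 𝔽 of characteristic not 2 or 3, let (ρ, V) be a representation of 𝔤 with no trivial subrepresentation (no nonzero v ∈ V with ρ(x)v = 0 for all x ∈ 𝔤), and let ψ : 𝔤 → V be a linear kernel vector. Then the image of ψ is a ρ-invariant subspace of V, and ψ induces an isomorphism of 𝔤-representations between the quotient algebra 𝔤/ker(ψ) equipped with the adjoint action and the subrepresentation im(ψ) ≤ V; in particular, ψ is 𝔤-equivariant: ψ([x,y]) = ρ(x)ψ(y) for all x, y ∈ 𝔤, and ker(ψ) is an ideal of 𝔤. -/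
/-!
Polarizing `⁅x, ψ x⁆ = 0` gives `⁅x, ψ y⁆ = -⁅y, ψ x⁆`. Regard
`Φ (a ⊗ b ⊗ c) = ⁅a, ψ ⁅b, c⁆ - ⁅b, ψ c⁆⁆` as a linear map on `𝔤 ⊗ 𝔤 ⊗ 𝔤`; a computation with
the polarization identity shows `Φ ⁅w, t⁆ = 2 ⁅w, Φ t⁆`. Expanding `Φ ⁅⁅w, y⁆, t⁆` by the
Jacobi identity then gives `4 ⁅⁅w, y⁆, Φ t⁆ = 2 ⁅⁅w, y⁆, Φ t⁆`, so every bracket kills the image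
of `Φ`. A semisimple Lie algebra is perfect, hence all of `𝔤` kills it, and the absence of
invariants forces first `Φ = 0` and then `ψ ⁅x, y⁆ = ⁅x, ψ y⁆`.
-/

attribute [local instance] LieRing.ofAssociativeRing

open LieModule TensorProduct

theorem two_nsmul_lie_lie_apply_eq_zero {L X M : Type*} [LieRing L] [AddCommGroup X]
    [AddCommGroup M] [LieRingModule L X] [LieRingModule L M] (f : X →+ M)
    (hf : ∀ (w : L) (x : X), f ⁅w, x⁆ = 2 • ⁅w, f x⁆) (w y : L) (x : X) :
    2 • ⁅⁅w, y⁆, f x⁆ = 0 := by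
  have h : f ⁅⁅w, y⁆, x⁆ = 2 • (2 • ⁅⁅w, y⁆, f x⁆) := by
    rw [lie_lie, map_sub, hf, hf, hf, hf, lie_nsmul, lie_nsmul, ← smul_sub, ← smul_sub, lie_lie]
  rw [hf, two_nsmul (2 • _)] at h
  exact left_eq_add.mp h

theorem LieAlgebra.IsSemisimple.lie_top_top_eq_top {R L : Type*} [CommRing R] [LieRing L]
    [LieAlgebra R L] [LieAlgebra.IsSemisimple R L] :
    ⁅(⊤ : LieIdeal R L), (⊤ : LieIdeal R L)⁆ = ⊤ := by
  set D : LieIdeal R L := ⁅(⊤ : LieIdeal R L), (⊤ : LieIdeal R L)⁆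
  have hDc : Dᶜ = ⊥ := by
    have : IsLieAbelian ↥(Dᶜ : LieIdeal R L) :=
      (LieSubmodule.lie_abelian_iff_lie_self_eq_bot Dᶜ).mpr <| eq_bot_iff.mpr <|
        (le_inf (LieSubmodule.mono_lie le_top le_top) (LieSubmodule.lie_le_right _ _)).trans
          inf_compl_eq_bot.le
    exact HasTrivialRadical.eq_bot_of_isSolvable Dᶜ
  simpa [hDc] using sup_compl_eq_top (x := D)

section

variable {R L M : Type*} [CommRing R] [LieRing L] [LieAlgebra R L] [AddCommGroup M] [Module R M]
  [LieRingModule L M] {ψ : L →ₗ[R] M}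

theorem lie_apply_eq_neg (hψ : ∀ x, ⁅x, ψ x⁆ = 0) (x y : L) : ⁅x, ψ y⁆ = -⁅y, ψ x⁆ := by
  have h := hψ (x + y)
  rw [map_add, add_lie, lie_add, lie_add, hψ, hψ, zero_add, add_zero] at h
  exact eq_neg_of_add_eq_zero_left h

theorem lie_apply_lie (hψ : ∀ x, ⁅x, ψ x⁆ = 0) (x y z : L) :
    ⁅z, ψ ⁅x, y⁆⁆ = ⁅y, ⁅x, ψ z⁆⁆ - ⁅x, ⁅y, ψ z⁆⁆ := by
  rw [lie_apply_eq_neg hψ, lie_lie, neg_sub]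

variable [LieModule R L M]

theorem lie_eq_zero_of_forall_lie_lie_eq_zero [LieAlgebra.IsSemisimple R L] {m : M}
    (h : ∀ x y : L, ⁅⁅x, y⁆, m⁆ = 0) (u : L) : ⁅u, m⁆ = 0 := by
  have hu : u ∈ ⁅(⊤ : LieIdeal R L), (⊤ : LieIdeal R L)⁆ := by
    rw [LieAlgebra.IsSemisimple.lie_top_top_eq_top]; trivial
  rw [← LieSubmodule.mem_toSubmodule, LieSubmodule.lieIdeal_oper_eq_linear_span'] at hu
  induction hu using Submodule.span_induction with
  | mem _ hx => obtain ⟨x, -, y, -, rfl⟩ := hx; exact h x y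
  | zero => exact zero_lie m
  | add _ _ _ _ hx hy => rw [add_lie, hx, hy, add_zero]
  | smul r _ _ hx => rw [smul_lie, hx, smul_zero]

variable (ψ) in
def equivarianceDefect : L ⊗[R] L →ₗ[R] M :=
  ψ ∘ₗ (toModuleHom R L L : L ⊗[R] L →ₗ[R] L) -
    (toModuleHom R L M : L ⊗[R] M →ₗ[R] M) ∘ₗ ψ.lTensor L

@[simp]
theorem equivarianceDefect_tmul (x y : L) :
    equivarianceDefect ψ (x ⊗ₜ y) = ψ ⁅x, y⁆ - ⁅x, ψ y⁆ := by
  simp [equivarianceDefect]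

variable (ψ) in
def lieEquivarianceDefect : L ⊗[R] (L ⊗[R] L) →ₗ[R] M :=
  (toModuleHom R L M : L ⊗[R] M →ₗ[R] M) ∘ₗ (equivarianceDefect ψ).lTensor L

@[simp]
theorem lieEquivarianceDefect_tmul (x y z : L) :
    lieEquivarianceDefect ψ (x ⊗ₜ (y ⊗ₜ z)) = ⁅x, ψ ⁅y, z⁆ - ⁅y, ψ z⁆⁆ := by
  simp [lieEquivarianceDefect]

-- Twice this identity is a formal consequence of polarization at the three pairs of brackets
-- below; the identity itself needs `2` to be cancellable.
theorem two_nsmul_lieEquivarianceDefect_lie_tmul (hψ : ∀ x, ⁅x, ψ x⁆ = 0) (w a b c : L) :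
    2 • lieEquivarianceDefect ψ ⁅w, a ⊗ₜ (b ⊗ₜ c)⁆ =
      2 • (2 • ⁅w, lieEquivarianceDefect ψ (a ⊗ₜ (b ⊗ₜ c))⁆) := by
  have pol := lie_apply_eq_neg hψ
  have e₁ := pol ⁅w, a⁆ ⁅b, c⁆
  have e₂ := pol ⁅w, b⁆ ⁅a, c⁆
  have e₃ := pol ⁅w, c⁆ ⁅a, b⁆
  simp only [TensorProduct.LieModule.lie_tmul_right, tmul_add, map_add,
    lieEquivarianceDefect_tmul, lie_sub, lie_apply_lie hψ] at e₁ e₂ e₃ ⊢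
  simp only [lie_lie, lie_sub, lie_neg, neg_sub, pol b a, pol c a, pol c b, pol w a, pol w b,
    pol w c] at e₁ e₂ e₃ ⊢
  linear_combination (norm := abel) e₁ - e₂ + e₃

theorem lieEquivarianceDefect_lie (h2 : IsSMulRegular M (2 : ℕ)) (hψ : ∀ x, ⁅x, ψ x⁆ = 0)
    (w : L) (t : L ⊗[R] (L ⊗[R] L)) :
    lieEquivarianceDefect ψ ⁅w, t⁆ = 2 • ⁅w, lieEquivarianceDefect ψ t⁆ := by
  apply h2
  have := ext_threefold' (g := 2 • lieEquivarianceDefect ψ ∘ₗ (toEnd R L _ w : _ →ₗ[R] _))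
    (h := 2 • (2 • (toEnd R L M w : M →ₗ[R] M) ∘ₗ lieEquivarianceDefect ψ))
    (by simpa using two_nsmul_lieEquivarianceDefect_lie_tmul hψ w)
  simpa using LinearMap.congr_fun this t

theorem map_lie_eq_lie_of_lie_apply_self_eq_zero [LieAlgebra.IsSemisimple R L]
    (h2 : IsSMulRegular M (2 : ℕ)) (htriv : ∀ m : M, (∀ x : L, ⁅x, m⁆ = 0) → m = 0)
    (hψ : ∀ x, ⁅x, ψ x⁆ = 0) (x y : L) : ψ ⁅x, y⁆ = ⁅x, ψ y⁆ := by
  have hΦ (t) : lieEquivarianceDefect ψ t = 0 := by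
    refine htriv _ (lie_eq_zero_of_forall_lie_lie_eq_zero (R := R) fun w y => h2 ?_)
    simpa using two_nsmul_lie_lie_apply_eq_zero (lieEquivarianceDefect ψ).toAddMonoidHom
      (lieEquivarianceDefect_lie h2 hψ) w y t
  refine sub_eq_zero.mp (htriv _ fun a => ?_)
  simpa using hΦ (a ⊗ₜ (x ⊗ₜ y))

end

theorem linearKernelVector_induces_iso_general {𝔽 : Type*} [Field 𝔽]
    (h2 : ringChar 𝔽 ≠ 2)
    {𝔤 V : Type*} [LieRing 𝔤] [LieAlgebra 𝔽 𝔤]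
    [LieAlgebra.IsSemisimple 𝔽 𝔤] [AddCommGroup V] [Module 𝔽 V]
    (ρ : 𝔤 →ₗ⁅𝔽⁆ Module.End 𝔽 V)
    (htriv : ∀ v : V, (∀ x : 𝔤, ρ x v = 0) → v = 0)
    (ψ : 𝔤 →ₗ[𝔽] V) (hψ : ∀ x : 𝔤, ρ x (ψ x) = 0) :
    (∀ x : 𝔤, ∀ v ∈ LinearMap.range ψ, ρ x v ∈ LinearMap.range ψ) ∧
    (∀ x y : 𝔤, ψ ⁅x, y⁆ = ρ x (ψ y)) ∧
    (∀ x y : 𝔤, y ∈ LinearMap.ker ψ → ⁅x, y⁆ ∈ LinearMap.ker ψ) ∧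
    ∃ e : (𝔤 ⧸ LinearMap.ker ψ) ≃ₗ[𝔽] LinearMap.range ψ,
      (∀ y : 𝔤, (e (Submodule.Quotient.mk y) : V) = ψ y) ∧
      (∀ x y : 𝔤, (e (Submodule.Quotient.mk ⁅x, y⁆) : V) =
        ρ x (e (Submodule.Quotient.mk y))) := by
  let := LieRingModule.compLieHom V ρ
  have := LieModule.compLieHom V ρ
  have h2V : IsSMulRegular V (2 : ℕ) := fun a b h =>
    smul_right_injective V (Ring.two_ne_zero h2) (by simpa only [two_smul, two_nsmul] using h)
  have heq : ∀ x y : 𝔤, ψ ⁅x, y⁆ = ρ x (ψ y) :=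
    map_lie_eq_lie_of_lie_apply_self_eq_zero h2V htriv hψ
  refine ⟨?_, heq, ?_, ψ.quotKerEquivRange, ψ.quotKerEquivRange_apply_mk, ?_⟩
  · rintro x _ ⟨y, rfl⟩
    exact ⟨⁅x, y⁆, heq x y⟩
  · intro x y hy
    rw [LinearMap.mem_ker] at hy ⊢
    rw [heq x y, hy, map_zero]
  · intro x y
    rw [ψ.quotKerEquivRange_apply_mk, ψ.quotKerEquivRange_apply_mk, heq x y]

/-- For a finite-dimensional semisimple Lie algebra over an algebraically closed field of
characteristic not 2 or 3, and a representation `(ρ, V)` with no trivial subrepresentation,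
a nonzero linear kernel vector `ψ` is `𝔤`-equivariant, its kernel is an ideal, its image is a
`ρ`-invariant subspace, and `ψ` induces an isomorphism of `𝔤`-representations between
`𝔤 / ker ψ` (with the adjoint action) and `im ψ`. -/
theorem linearKernelVector_induces_iso {𝔽 : Type*} [Field 𝔽] [IsAlgClosed 𝔽]
    (h2 : ringChar 𝔽 ≠ 2) (h3 : ringChar 𝔽 ≠ 3)
    {𝔤 V : Type*} [LieRing 𝔤] [LieAlgebra 𝔽 𝔤] [Module.Finite 𝔽 𝔤]
    [LieAlgebra.IsSemisimple 𝔽 𝔤] [AddCommGroup V] [Module 𝔽 V]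
    (ρ : 𝔤 →ₗ⁅𝔽⁆ Module.End 𝔽 V)
    (htriv : ∀ v : V, (∀ x : 𝔤, ρ x v = 0) → v = 0)
    (ψ : 𝔤 →ₗ[𝔽] V) (hψ0 : ψ ≠ 0) (hψ : ∀ x : 𝔤, ρ x (ψ x) = 0) :
    (∀ x : 𝔤, ∀ v ∈ LinearMap.range ψ, ρ x v ∈ LinearMap.range ψ) ∧
    (∀ x y : 𝔤, ψ ⁅x, y⁆ = ρ x (ψ y)) ∧
    (∀ x y : 𝔤, y ∈ LinearMap.ker ψ → ⁅x, y⁆ ∈ LinearMap.ker ψ) ∧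
    ∃ e : (𝔤 ⧸ LinearMap.ker ψ) ≃ₗ[𝔽] LinearMap.range ψ,
      (∀ y : 𝔤, (e (Submodule.Quotient.mk y) : V) = ψ y) ∧
      (∀ x y : 𝔤, (e (Submodule.Quotient.mk ⁅x, y⁆) : V) =
        ρ x (e (Submodule.Quotient.mk y))) :=
  linearKernelVector_induces_iso_general h2 ρ htriv ψ hψ
end
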